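/- Let c be an integer and R_c = ℚ[a,b]/(b⁴, a⁴ + c·a³·b). Let P̃ = (1−b²)⁴·((1+a)⁴ + c·b·(1+a)³)·((1−a)⁴ − c·b·(1−a)³) ∈ R_c and for each i let p_i = (−1)ⁱ times the homogeneous degree-2i component of P̃ (with deg a = deg b = 1). Then p₃ = −c³ · a³b³ in R_c. (Equivalently: the Pontryagin number p₃[X¹²_c] of the projectivization X¹²_c = P((c·γ¹) ⊕ ε³) over ℂP³ equals −c³.) -/
import Mathlib

open MvPolynomial

namespace HW3

noncomputable def a : MvPolynomial (Fin 2) ℚ := X 0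
noncomputable def b : MvPolynomial (Fin 2) ℚ := X 1

noncomputable def I (c : ℤ) : Ideal (MvPolynomial (Fin 2) ℚ) :=
  Ideal.span {b ^ 4, a ^ 4 + C (c : ℚ) * (a ^ 3 * b)}

noncomputable def Pt (c : ℤ) : MvPolynomial (Fin 2) ℚ :=
  (1 - b ^ 2) ^ 4 * ((1 + a) ^ 4 + C (c : ℚ) * b * (1 + a) ^ 3) *
    ((1 - a) ^ 4 - C (c : ℚ) * b * (1 - a) ^ 3)

/-- `p c i` is `(-1)^i` times the homogeneous degree-`2*i` component of `Pt c`
(with `deg a = deg b = 1`), i.e. the `i`-th Pontryagin class. -/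
noncomputable def p (c : ℤ) (i : ℕ) : MvPolynomial (Fin 2) ℚ :=
  ((-1 : ℚ) ^ i) • homogeneousComponent (2 * i) (Pt c)

lemma term_hom (q r : ℚ) (k i j n : ℕ) (h : i + j = n) :
    (C q * C r ^ k * (X 0 ^ i * X 1 ^ j) : MvPolynomial (Fin 2) ℚ).IsHomogeneous n := by
  subst h
  rw [← map_pow, ← map_mul]
  simpa using (isHomogeneous_C (Fin 2) (q * r ^ k)).mul
    (((isHomogeneous_X ℚ (0 : Fin 2)).pow i).mul ((isHomogeneous_X ℚ (1 : Fin 2)).pow j))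

noncomputable def Q0 (c : ℤ) : MvPolynomial (Fin 2) ℚ :=
  C (1 : ℚ) * C (c : ℚ) ^ 0 * (X 0 ^ 0 * X 1 ^ 0)

noncomputable def Q2 (c : ℤ) : MvPolynomial (Fin 2) ℚ :=
  C (-4 : ℚ) * C (c : ℚ) ^ 0 * (X 0 ^ 0 * X 1 ^ 2) +
    C (-1 : ℚ) * C (c : ℚ) ^ 2 * (X 0 ^ 0 * X 1 ^ 2) +
    C (-2 : ℚ) * C (c : ℚ) ^ 1 * (X 0 ^ 1 * X 1 ^ 1) +
    C (-4 : ℚ) * C (c : ℚ) ^ 0 * (X 0 ^ 2 * X 1 ^ 0)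

noncomputable def Q4 (c : ℤ) : MvPolynomial (Fin 2) ℚ :=
  C (6 : ℚ) * C (c : ℚ) ^ 0 * (X 0 ^ 0 * X 1 ^ 4) +
    C (4 : ℚ) * C (c : ℚ) ^ 2 * (X 0 ^ 0 * X 1 ^ 4) +
    C (8 : ℚ) * C (c : ℚ) ^ 1 * (X 0 ^ 1 * X 1 ^ 3) +
    C (16 : ℚ) * C (c : ℚ) ^ 0 * (X 0 ^ 2 * X 1 ^ 2) +
    C (3 : ℚ) * C (c : ℚ) ^ 2 * (X 0 ^ 2 * X 1 ^ 2) +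
    C (6 : ℚ) * C (c : ℚ) ^ 1 * (X 0 ^ 3 * X 1 ^ 1) +
    C (6 : ℚ) * C (c : ℚ) ^ 0 * (X 0 ^ 4 * X 1 ^ 0)

noncomputable def Q6 (c : ℤ) : MvPolynomial (Fin 2) ℚ :=
  C (-4 : ℚ) * C (c : ℚ) ^ 0 * (X 0 ^ 0 * X 1 ^ 6) +
    C (-6 : ℚ) * C (c : ℚ) ^ 2 * (X 0 ^ 0 * X 1 ^ 6) +
    C (-12 : ℚ) * C (c : ℚ) ^ 1 * (X 0 ^ 1 * X 1 ^ 5) +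
    C (-24 : ℚ) * C (c : ℚ) ^ 0 * (X 0 ^ 2 * X 1 ^ 4) +
    C (-12 : ℚ) * C (c : ℚ) ^ 2 * (X 0 ^ 2 * X 1 ^ 4) +
    C (-24 : ℚ) * C (c : ℚ) ^ 1 * (X 0 ^ 3 * X 1 ^ 3) +
    C (-24 : ℚ) * C (c : ℚ) ^ 0 * (X 0 ^ 4 * X 1 ^ 2) +
    C (-3 : ℚ) * C (c : ℚ) ^ 2 * (X 0 ^ 4 * X 1 ^ 2) +
    C (-6 : ℚ) * C (c : ℚ) ^ 1 * (X 0 ^ 5 * X 1 ^ 1) +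
    C (-4 : ℚ) * C (c : ℚ) ^ 0 * (X 0 ^ 6 * X 1 ^ 0)

noncomputable def Q8 (c : ℤ) : MvPolynomial (Fin 2) ℚ :=
  C (1 : ℚ) * C (c : ℚ) ^ 0 * (X 0 ^ 0 * X 1 ^ 8) +
    C (4 : ℚ) * C (c : ℚ) ^ 2 * (X 0 ^ 0 * X 1 ^ 8) +
    C (8 : ℚ) * C (c : ℚ) ^ 1 * (X 0 ^ 1 * X 1 ^ 7) +
    C (16 : ℚ) * C (c : ℚ) ^ 0 * (X 0 ^ 2 * X 1 ^ 6) +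
    C (18 : ℚ) * C (c : ℚ) ^ 2 * (X 0 ^ 2 * X 1 ^ 6) +
    C (36 : ℚ) * C (c : ℚ) ^ 1 * (X 0 ^ 3 * X 1 ^ 5) +
    C (36 : ℚ) * C (c : ℚ) ^ 0 * (X 0 ^ 4 * X 1 ^ 4) +
    C (12 : ℚ) * C (c : ℚ) ^ 2 * (X 0 ^ 4 * X 1 ^ 4) +
    C (24 : ℚ) * C (c : ℚ) ^ 1 * (X 0 ^ 5 * X 1 ^ 3) +
    C (16 : ℚ) * C (c : ℚ) ^ 0 * (X 0 ^ 6 * X 1 ^ 2) +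
    C (1 : ℚ) * C (c : ℚ) ^ 2 * (X 0 ^ 6 * X 1 ^ 2) +
    C (2 : ℚ) * C (c : ℚ) ^ 1 * (X 0 ^ 7 * X 1 ^ 1) +
    C (1 : ℚ) * C (c : ℚ) ^ 0 * (X 0 ^ 8 * X 1 ^ 0)

noncomputable def Q10 (c : ℤ) : MvPolynomial (Fin 2) ℚ :=
  C (-1 : ℚ) * C (c : ℚ) ^ 2 * (X 0 ^ 0 * X 1 ^ 10) +
    C (-2 : ℚ) * C (c : ℚ) ^ 1 * (X 0 ^ 1 * X 1 ^ 9) +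
    C (-4 : ℚ) * C (c : ℚ) ^ 0 * (X 0 ^ 2 * X 1 ^ 8) +
    C (-12 : ℚ) * C (c : ℚ) ^ 2 * (X 0 ^ 2 * X 1 ^ 8) +
    C (-24 : ℚ) * C (c : ℚ) ^ 1 * (X 0 ^ 3 * X 1 ^ 7) +
    C (-24 : ℚ) * C (c : ℚ) ^ 0 * (X 0 ^ 4 * X 1 ^ 6) +
    C (-18 : ℚ) * C (c : ℚ) ^ 2 * (X 0 ^ 4 * X 1 ^ 6) +
    C (-36 : ℚ) * C (c : ℚ) ^ 1 * (X 0 ^ 5 * X 1 ^ 5) +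
    C (-24 : ℚ) * C (c : ℚ) ^ 0 * (X 0 ^ 6 * X 1 ^ 4) +
    C (-4 : ℚ) * C (c : ℚ) ^ 2 * (X 0 ^ 6 * X 1 ^ 4) +
    C (-8 : ℚ) * C (c : ℚ) ^ 1 * (X 0 ^ 7 * X 1 ^ 3) +
    C (-4 : ℚ) * C (c : ℚ) ^ 0 * (X 0 ^ 8 * X 1 ^ 2)

noncomputable def Q12 (c : ℤ) : MvPolynomial (Fin 2) ℚ :=
  C (3 : ℚ) * C (c : ℚ) ^ 2 * (X 0 ^ 2 * X 1 ^ 10) +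
    C (6 : ℚ) * C (c : ℚ) ^ 1 * (X 0 ^ 3 * X 1 ^ 9) +
    C (6 : ℚ) * C (c : ℚ) ^ 0 * (X 0 ^ 4 * X 1 ^ 8) +
    C (12 : ℚ) * C (c : ℚ) ^ 2 * (X 0 ^ 4 * X 1 ^ 8) +
    C (24 : ℚ) * C (c : ℚ) ^ 1 * (X 0 ^ 5 * X 1 ^ 7) +
    C (16 : ℚ) * C (c : ℚ) ^ 0 * (X 0 ^ 6 * X 1 ^ 6) +
    C (6 : ℚ) * C (c : ℚ) ^ 2 * (X 0 ^ 6 * X 1 ^ 6) +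
    C (12 : ℚ) * C (c : ℚ) ^ 1 * (X 0 ^ 7 * X 1 ^ 5) +
    C (6 : ℚ) * C (c : ℚ) ^ 0 * (X 0 ^ 8 * X 1 ^ 4)

noncomputable def Q14 (c : ℤ) : MvPolynomial (Fin 2) ℚ :=
  C (-3 : ℚ) * C (c : ℚ) ^ 2 * (X 0 ^ 4 * X 1 ^ 10) +
    C (-6 : ℚ) * C (c : ℚ) ^ 1 * (X 0 ^ 5 * X 1 ^ 9) +
    C (-4 : ℚ) * C (c : ℚ) ^ 0 * (X 0 ^ 6 * X 1 ^ 8) +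
    C (-4 : ℚ) * C (c : ℚ) ^ 2 * (X 0 ^ 6 * X 1 ^ 8) +
    C (-8 : ℚ) * C (c : ℚ) ^ 1 * (X 0 ^ 7 * X 1 ^ 7) +
    C (-4 : ℚ) * C (c : ℚ) ^ 0 * (X 0 ^ 8 * X 1 ^ 6)

noncomputable def Q16 (c : ℤ) : MvPolynomial (Fin 2) ℚ :=
  C (1 : ℚ) * C (c : ℚ) ^ 2 * (X 0 ^ 6 * X 1 ^ 10) +
    C (2 : ℚ) * C (c : ℚ) ^ 1 * (X 0 ^ 7 * X 1 ^ 9) +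
    C (1 : ℚ) * C (c : ℚ) ^ 0 * (X 0 ^ 8 * X 1 ^ 8)

lemma hQ0 (c : ℤ) : (Q0 c).IsHomogeneous 0 := by
  unfold Q0
  exact (term_hom (1 : ℚ) _ 0 0 0 0 (by norm_num))

lemma hQ2 (c : ℤ) : (Q2 c).IsHomogeneous 2 := by
  unfold Q2
  exact ((((term_hom (-4 : ℚ) _ 0 0 2 2 (by norm_num)).add (term_hom (-1 : ℚ) _ 2 0 2 2 (by norm_num))).add (term_hom (-2 : ℚ) _ 1 1 1 2 (by norm_num))).add (term_hom (-4 : ℚ) _ 0 2 0 2 (by norm_num)))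

lemma hQ4 (c : ℤ) : (Q4 c).IsHomogeneous 4 := by
  unfold Q4
  exact (((((((term_hom (6 : ℚ) _ 0 0 4 4 (by norm_num)).add (term_hom (4 : ℚ) _ 2 0 4 4 (by norm_num))).add (term_hom (8 : ℚ) _ 1 1 3 4 (by norm_num))).add (term_hom (16 : ℚ) _ 0 2 2 4 (by norm_num))).add (term_hom (3 : ℚ) _ 2 2 2 4 (by norm_num))).add (term_hom (6 : ℚ) _ 1 3 1 4 (by norm_num))).add (term_hom (6 : ℚ) _ 0 4 0 4 (by norm_num)))

lemma hQ6 (c : ℤ) : (Q6 c).IsHomogeneous 6 := by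
  unfold Q6
  exact ((((((((((term_hom (-4 : ℚ) _ 0 0 6 6 (by norm_num)).add (term_hom (-6 : ℚ) _ 2 0 6 6 (by norm_num))).add (term_hom (-12 : ℚ) _ 1 1 5 6 (by norm_num))).add (term_hom (-24 : ℚ) _ 0 2 4 6 (by norm_num))).add (term_hom (-12 : ℚ) _ 2 2 4 6 (by norm_num))).add (term_hom (-24 : ℚ) _ 1 3 3 6 (by norm_num))).add (term_hom (-24 : ℚ) _ 0 4 2 6 (by norm_num))).add (term_hom (-3 : ℚ) _ 2 4 2 6 (by norm_num))).add (term_hom (-6 : ℚ) _ 1 5 1 6 (by norm_num))).add (term_hom (-4 : ℚ) _ 0 6 0 6 (by norm_num)))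

lemma hQ8 (c : ℤ) : (Q8 c).IsHomogeneous 8 := by
  unfold Q8
  exact (((((((((((((term_hom (1 : ℚ) _ 0 0 8 8 (by norm_num)).add (term_hom (4 : ℚ) _ 2 0 8 8 (by norm_num))).add (term_hom (8 : ℚ) _ 1 1 7 8 (by norm_num))).add (term_hom (16 : ℚ) _ 0 2 6 8 (by norm_num))).add (term_hom (18 : ℚ) _ 2 2 6 8 (by norm_num))).add (term_hom (36 : ℚ) _ 1 3 5 8 (by norm_num))).add (term_hom (36 : ℚ) _ 0 4 4 8 (by norm_num))).add (term_hom (12 : ℚ) _ 2 4 4 8 (by norm_num))).add (term_hom (24 : ℚ) _ 1 5 3 8 (by norm_num))).add (term_hom (16 : ℚ) _ 0 6 2 8 (by norm_num))).add (term_hom (1 : ℚ) _ 2 6 2 8 (by norm_num))).add (term_hom (2 : ℚ) _ 1 7 1 8 (by norm_num))).add (term_hom (1 : ℚ) _ 0 8 0 8 (by norm_num)))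

lemma hQ10 (c : ℤ) : (Q10 c).IsHomogeneous 10 := by
  unfold Q10
  exact ((((((((((((term_hom (-1 : ℚ) _ 2 0 10 10 (by norm_num)).add (term_hom (-2 : ℚ) _ 1 1 9 10 (by norm_num))).add (term_hom (-4 : ℚ) _ 0 2 8 10 (by norm_num))).add (term_hom (-12 : ℚ) _ 2 2 8 10 (by norm_num))).add (term_hom (-24 : ℚ) _ 1 3 7 10 (by norm_num))).add (term_hom (-24 : ℚ) _ 0 4 6 10 (by norm_num))).add (term_hom (-18 : ℚ) _ 2 4 6 10 (by norm_num))).add (term_hom (-36 : ℚ) _ 1 5 5 10 (by norm_num))).add (term_hom (-24 : ℚ) _ 0 6 4 10 (by norm_num))).add (term_hom (-4 : ℚ) _ 2 6 4 10 (by norm_num))).add (term_hom (-8 : ℚ) _ 1 7 3 10 (by norm_num))).add (term_hom (-4 : ℚ) _ 0 8 2 10 (by norm_num)))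

lemma hQ12 (c : ℤ) : (Q12 c).IsHomogeneous 12 := by
  unfold Q12
  exact (((((((((term_hom (3 : ℚ) _ 2 2 10 12 (by norm_num)).add (term_hom (6 : ℚ) _ 1 3 9 12 (by norm_num))).add (term_hom (6 : ℚ) _ 0 4 8 12 (by norm_num))).add (term_hom (12 : ℚ) _ 2 4 8 12 (by norm_num))).add (term_hom (24 : ℚ) _ 1 5 7 12 (by norm_num))).add (term_hom (16 : ℚ) _ 0 6 6 12 (by norm_num))).add (term_hom (6 : ℚ) _ 2 6 6 12 (by norm_num))).add (term_hom (12 : ℚ) _ 1 7 5 12 (by norm_num))).add (term_hom (6 : ℚ) _ 0 8 4 12 (by norm_num)))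

lemma hQ14 (c : ℤ) : (Q14 c).IsHomogeneous 14 := by
  unfold Q14
  exact ((((((term_hom (-3 : ℚ) _ 2 4 10 14 (by norm_num)).add (term_hom (-6 : ℚ) _ 1 5 9 14 (by norm_num))).add (term_hom (-4 : ℚ) _ 0 6 8 14 (by norm_num))).add (term_hom (-4 : ℚ) _ 2 6 8 14 (by norm_num))).add (term_hom (-8 : ℚ) _ 1 7 7 14 (by norm_num))).add (term_hom (-4 : ℚ) _ 0 8 6 14 (by norm_num)))

lemma hQ16 (c : ℤ) : (Q16 c).IsHomogeneous 16 := by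
  unfold Q16
  exact (((term_hom (1 : ℚ) _ 2 6 10 16 (by norm_num)).add (term_hom (2 : ℚ) _ 1 7 9 16 (by norm_num))).add (term_hom (1 : ℚ) _ 0 8 8 16 (by norm_num)))

lemma hsum (c : ℤ) : Pt c = Q0 c + Q2 c + Q4 c + Q6 c + Q8 c + Q10 c + Q12 c + Q14 c + Q16 c := by
  unfold Pt a b Q0 Q2 Q4 Q6 Q8 Q10 Q12 Q14 Q16
  simp only [map_neg, map_ofNat, map_one]
  ring

lemma hcomp (c : ℤ) : homogeneousComponent 6 (Pt c) = Q6 c := by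
  rw [hsum c]
  simp only [map_add,
    homogeneousComponent_of_mem ((mem_homogeneousSubmodule _ _).mpr (hQ0 c)),
    homogeneousComponent_of_mem ((mem_homogeneousSubmodule _ _).mpr (hQ2 c)),
    homogeneousComponent_of_mem ((mem_homogeneousSubmodule _ _).mpr (hQ4 c)),
    homogeneousComponent_of_mem ((mem_homogeneousSubmodule _ _).mpr (hQ6 c)),
    homogeneousComponent_of_mem ((mem_homogeneousSubmodule _ _).mpr (hQ8 c)),
    homogeneousComponent_of_mem ((mem_homogeneousSubmodule _ _).mpr (hQ10 c)),
    homogeneousComponent_of_mem ((mem_homogeneousSubmodule _ _).mpr (hQ12 c)),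
    homogeneousComponent_of_mem ((mem_homogeneousSubmodule _ _).mpr (hQ14 c)),
    homogeneousComponent_of_mem ((mem_homogeneousSubmodule _ _).mpr (hQ16 c))]
  norm_num

theorem pontryagin_number (c : ℤ) :
    Ideal.Quotient.mk (I c) (p c 3) =
      Ideal.Quotient.mk (I c) (C (-(c : ℚ) ^ 3) * (a ^ 3 * b ^ 3)) := by
  have hp3 : p c 3 = -(Q6 c) := by
    unfold p
    norm_num [hcomp c]
  rw [hp3, Ideal.Quotient.eq]
  unfold I Q6 a b
  rw [Ideal.mem_span_pair]
  refine ⟨C (4 : ℚ) * X 1 ^ 2 + C (6 : ℚ) * C (c : ℚ) ^ 2 * X 1 ^ 2 +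
      C (12 : ℚ) * C (c : ℚ) * X 0 * X 1 + C (24 : ℚ) * X 0 ^ 2 +
      C (12 : ℚ) * C (c : ℚ) ^ 2 * X 0 ^ 2,
    C (24 : ℚ) * X 1 ^ 2 + C (c : ℚ) ^ 2 * X 1 ^ 2 +
      C (2 : ℚ) * C (c : ℚ) * X 0 * X 1 + C (4 : ℚ) * X 0 ^ 2, ?_⟩
  simp only [map_neg, map_pow, map_mul, map_ofNat, map_one]
  ring

end HW3
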